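/- arXiv:1606.04718 — 3 statements merged into one kernel-verified Lean document; each statement's English description precedes it below -/
import Mathlib

section
/- In a connected undirected graph, a vertex v is colored black at some stage of BFS from a root s (i.e., v has been fully processed) if and only if there exists a path from s to v all of whose vertices are white or black at that stage, i.e., a path avoiding all grey vertices (vertices currently in the queue). -/
/-!
BFS maintains an invariant: every discovered vertex `v` is reached from `s` by a walk whose
vertices other than `v` are black, and every neighbour of a black vertex is discovered.
The first half gives the forward direction at once. For the converse, a walk from `s` that
avoids the grey vertices starts at a discovered vertex, and the second half pushes
discoveredness along it edge by edge, since each vertex on it that is discovered and not grey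
is black.
-/

/-- A state of breadth-first search: the FIFO queue (the grey vertices) and the set of
discovered vertices.  A vertex is white if undiscovered, grey if in the queue, and
black if discovered and no longer in the queue (fully processed). -/
structure BFSState (V : Type*) where
  queue : List V
  discovered : Finset V

/-- One step of BFS: remove the first vertex `u` of the queue and append all of its
currently undiscovered neighbors to the queue, marking them discovered. -/
def BFSStep {V : Type*} [DecidableEq V] (G : SimpleGraph V) (s t : BFSState V) : Prop :=
  ∃ (u : V) (rest new : List V),
    s.queue = u :: rest ∧ new.Nodup ∧
    (∀ v, v ∈ new ↔ G.Adj u v ∧ v ∉ s.discovered) ∧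
    t.queue = rest ++ new ∧ t.discovered = s.discovered ∪ new.toFinset

section

variable {V : Type*}

namespace BFSState

def IsBlack (st : BFSState V) (x : V) : Prop :=
  x ∈ st.discovered ∧ x ∉ st.queue

end BFSState

structure BFSInvariant (G : SimpleGraph V) (s : V) (st : BFSState V) : Prop where
  root_mem : s ∈ st.discovered
  queue_nodup : st.queue.Nodup
  queue_subset : ∀ x ∈ st.queue, x ∈ st.discovered
  exists_walk : ∀ v ∈ st.discovered,
    ∃ p : G.Walk s v, ∀ x ∈ p.support, x ≠ v → st.IsBlack x
  mem_discovered_of_adj : ∀ x y, G.Adj x y → st.IsBlack x → y ∈ st.discovered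

variable {G : SimpleGraph V}

namespace BFSStep

variable [DecidableEq V] {a b : BFSState V}

theorem discovered_subset (h : BFSStep G a b) : a.discovered ⊆ b.discovered := by
  obtain ⟨u, rest, new, -, -, -, -, hd⟩ := h
  exact hd ▸ Finset.subset_union_left

theorem isBlack (h : BFSStep G a b) {x : V} (hx : a.IsBlack x) : b.IsBlack x := by
  refine ⟨h.discovered_subset hx.1, fun hxb => ?_⟩
  obtain ⟨u, rest, new, hq, -, hnew, hq', -⟩ := h
  rcases List.mem_append.mp (hq' ▸ hxb) with hrest | hnew'
  · exact hx.2 (hq ▸ List.mem_cons_of_mem u hrest)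
  · exact ((hnew x).mp hnew').2 hx.1

theorem queue_subset (h : BFSStep G a b) (hsub : ∀ x ∈ a.queue, x ∈ a.discovered) :
    ∀ x ∈ b.queue, x ∈ b.discovered := by
  obtain ⟨u, rest, new, hq, -, -, hq', hd⟩ := h
  intro x hx
  rw [hd, Finset.mem_union, List.mem_toFinset]
  rcases List.mem_append.mp (hq' ▸ hx) with hrest | hnew
  · exact Or.inl (hsub x (hq ▸ List.mem_cons_of_mem u hrest))
  · exact Or.inr hnew

theorem queue_nodup (h : BFSStep G a b) (hsub : ∀ x ∈ a.queue, x ∈ a.discovered)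
    (hnd : a.queue.Nodup) : b.queue.Nodup := by
  obtain ⟨u, rest, new, hq, hnew_nd, hnew, hq', -⟩ := h
  rw [hq] at hnd hsub
  rw [hq']
  refine hnd.of_cons.append hnew_nd fun x hrest hnew' => ?_
  exact ((hnew x).mp hnew').2 (hsub x (List.mem_cons_of_mem u hrest))

/-- The step processes exactly one vertex `u`, the head of the queue. -/
theorem exists_head (h : BFSStep G a b) (hsub : ∀ x ∈ a.queue, x ∈ a.discovered)
    (hnd : a.queue.Nodup) :
    ∃ u ∈ a.discovered, b.IsBlack u ∧ (∀ y, G.Adj u y → y ∈ b.discovered) ∧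
      (∀ y ∈ b.discovered, y ∈ a.discovered ∨ G.Adj u y) ∧
      (∀ x, b.IsBlack x → a.IsBlack x ∨ x = u) := by
  obtain ⟨u, rest, new, hq, -, hnew, hq', hd⟩ := h
  have hu : u ∈ a.discovered := hsub u (hq ▸ List.mem_cons_self)
  have hu_rest : u ∉ rest := (List.nodup_cons.mp (hq ▸ hnd)).1
  refine ⟨u, hu, ⟨hd ▸ Finset.mem_union_left _ hu, fun hub => ?_⟩, fun y hy => ?_,
    fun y hyb => ?_, fun x hx => ?_⟩
  · rcases List.mem_append.mp (hq' ▸ hub) with hrest | hnew'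
    · exact hu_rest hrest
    · exact ((hnew u).mp hnew').2 hu
  · rw [hd, Finset.mem_union, List.mem_toFinset, hnew]
    tauto
  · rw [hd, Finset.mem_union, List.mem_toFinset, hnew] at hyb
    tauto
  · by_cases hxu : x = u
    · exact Or.inr hxu
    · refine Or.inl ⟨?_, ?_⟩
      · have hxd : x ∈ a.discovered ∪ new.toFinset := hd ▸ hx.1
        rw [Finset.mem_union, List.mem_toFinset] at hxd
        exact hxd.resolve_right fun hnew' => hx.2 (hq' ▸ List.mem_append_right rest hnew')
      · rw [hq, List.mem_cons, not_or]
        exact ⟨hxu, fun hrest => hx.2 (hq' ▸ List.mem_append_left new hrest)⟩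

end BFSStep

namespace BFSInvariant

variable {s : V}

theorem init : BFSInvariant G s ⟨[s], {s}⟩ where
  root_mem := Finset.mem_singleton_self s
  queue_nodup := List.nodup_singleton s
  queue_subset x hx := by simp_all
  exists_walk v hv := by
    obtain rfl := Finset.mem_singleton.mp hv
    exact ⟨.nil, by simp⟩
  mem_discovered_of_adj x _ _ hx := absurd (by simpa using hx.1) hx.2

theorem step [DecidableEq V] {a b : BFSState V} (hI : BFSInvariant G s a) (h : BFSStep G a b) :
    BFSInvariant G s b := by
  obtain ⟨u, hu, hub, hadj, hdisc, hblack⟩ := h.exists_head hI.queue_subset hI.queue_nodup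
  refine ⟨h.discovered_subset hI.root_mem, h.queue_nodup hI.queue_subset hI.queue_nodup,
    h.queue_subset hI.queue_subset, fun v hv => ?_, fun x y hxy hx => ?_⟩
  · rcases hdisc v hv with hva | huv
    · obtain ⟨p, hp⟩ := hI.exists_walk v hva
      exact ⟨p, fun x hx hxv => h.isBlack (hp x hx hxv)⟩
    · obtain ⟨p, hp⟩ := hI.exists_walk u hu
      refine ⟨p.concat huv, fun x hx hxv => ?_⟩
      rw [SimpleGraph.Walk.support_concat, List.mem_append, List.mem_singleton] at hx
      rcases hx with hx | rfl
      · by_cases hxu : x = u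
        · exact hxu ▸ hub
        · exact h.isBlack (hp x hx hxu)
      · exact absurd rfl hxv
  · rcases hblack x hx with hxa | rfl
    · exact h.discovered_subset (hI.mem_discovered_of_adj x y hxy hxa)
    · exact hadj y hxy

theorem of_reflTransGen [DecidableEq V] {st : BFSState V}
    (h : Relation.ReflTransGen (BFSStep G) ⟨[s], {s}⟩ st) : BFSInvariant G s st := by
  induction h with
  | refl => exact init
  | tail _ hstep ih => exact ih.step hstep

theorem mem_discovered_of_walk {st : BFSState V} (hI : BFSInvariant G s st) {x y : V}
    (p : G.Walk x y) (hx : x ∈ st.discovered) (hp : ∀ u ∈ p.support, u ∉ st.queue) :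
    y ∈ st.discovered := by
  induction p with
  | nil => exact hx
  | cons hxz q ih =>
    refine ih (hI.mem_discovered_of_adj _ _ hxz ⟨hx, hp _ (List.mem_cons_self ..)⟩) ?_
    exact fun u hu => hp u (List.mem_cons_of_mem _ hu)

end BFSInvariant

end

theorem bfs_black_iff_path_avoiding_grey_general {V : Type*} [DecidableEq V]
    (G : SimpleGraph V) (s : V) (st : BFSState V)
    (h : Relation.ReflTransGen (BFSStep G) ⟨[s], {s}⟩ st) (v : V) :
    (v ∈ st.discovered ∧ v ∉ st.queue) ↔
      ∃ p : G.Walk s v, ∀ u ∈ p.support, u ∉ st.queue := by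
  have hI := BFSInvariant.of_reflTransGen h
  constructor
  · rintro ⟨hv, hvq⟩
    obtain ⟨p, hp⟩ := hI.exists_walk v hv
    refine ⟨p, fun u hu => ?_⟩
    by_cases huv : u = v
    · exact huv ▸ hvq
    · exact (hp u hu huv).2
  · rintro ⟨p, hp⟩
    exact ⟨hI.mem_discovered_of_walk p hI.root_mem hp, hp v p.end_mem_support⟩

/-- At any stage of a BFS from `s` on a connected graph, a vertex `v` is black
(discovered and not in the queue) if and only if there is a path (walk) from `s` to `v`
all of whose vertices avoid the queue, i.e. are white or black at that stage. -/
theorem bfs_black_iff_path_avoiding_grey {V : Type*} [Fintype V] [DecidableEq V]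
    (G : SimpleGraph V) (hG : G.Connected) (s : V) (st : BFSState V)
    (h : Relation.ReflTransGen (BFSStep G) ⟨[s], {s}⟩ st) (v : V) :
    (v ∈ st.discovered ∧ v ∉ st.queue) ↔
      ∃ p : G.Walk s v, ∀ u ∈ p.support, u ∉ st.queue :=
  bfs_black_iff_path_avoiding_grey_general G s st h v
end

section
/- Let D be a chain decomposition of a connected undirected graph G, with first chain D1. Then G is 2-vertex-connected (biconnected) if and only if the minimum degree of G is at least 2 and D1 is the only chain in D that is a cycle. -/
variable {V : Type*} [Fintype V] [DecidableEq V]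

/-- Follow tree edges (parent pointers) towards the root, starting at `w`, stopping at
the first vertex that is already visited, or at the root.  The first argument is fuel. -/
def towardRoot (parent : V → V) (root : V) (visited : Finset V) : ℕ → V → List V
  | 0, w => [w]
  | n + 1, w =>
      if w ∈ visited ∨ w = root then [w]
      else w :: towardRoot parent root visited n (parent w)

/-- Schmidt's chain construction: process the back edges in order; the back edge `(v, w)`
(oriented away from the root, so `v` is an ancestor of `w`) generates the chain starting
at `v`, following the back edge to `w` and then tree edges towards the root, stopping at
the first already-visited vertex (or the root); all vertices encountered are marked
visited. -/
def runChains (parent : V → V) (root : V) : List (V × V) → Finset V → List (List V)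
  | [], _ => []
  | (v, w) :: rest, visited =>
      let c := v :: towardRoot parent root (insert v visited) (Fintype.card V) w
      c :: runChains parent root rest (visited ∪ c.toFinset)

/-- A DFS tree of a graph `G`, rooted at `root`, given by parent pointers, together with
discovery times `dfi` and the list of back edges `(v, w)` (with the ancestor `v` first,
i.e. oriented away from the root), listed in increasing order of the discovery time of
their origin, as in Schmidt's chain decomposition. -/
structure SchmidtDFS (G : SimpleGraph V) where
  root : V
  parent : V → V
  dfi : V → ℕ
  backEdges : List (V × V)
  parent_root : parent root = root
  parent_adj : ∀ v, v ≠ root → G.Adj v (parent v)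
  reaches_root : ∀ v, ∃ k, parent^[k] v = root
  dfi_inj : Function.Injective dfi
  dfi_parent : ∀ v, v ≠ root → dfi (parent v) < dfi v
  /-- every back edge is an edge of `G` joining a vertex `w` to a proper ancestor `v`
  which is not its parent (so it is not a tree edge) -/
  backEdges_spec : ∀ p ∈ backEdges, G.Adj p.1 p.2 ∧ p.1 ≠ parent p.2 ∧
      ∃ k, 2 ≤ k ∧ parent^[k] p.2 = p.1
  /-- every non-tree edge of `G` appears among the back edges -/
  backEdges_complete : ∀ u v, G.Adj u v → u ≠ parent v → v ≠ parent u →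
      (u, v) ∈ backEdges ∨ (v, u) ∈ backEdges
  backEdges_nodup : (backEdges.map fun p => s(p.1, p.2)).Nodup
  /-- back edges are processed in increasing order of the discovery time of their origin -/
  backEdges_sorted : backEdges.Pairwise fun p q => dfi p.1 ≤ dfi q.1

/-- The chain decomposition determined by a DFS structure: initially no vertex is
visited, and back edges are processed in order. -/
def SchmidtDFS.chains {G : SimpleGraph V} (D : SchmidtDFS G) : List (List V) :=
  runChains D.parent D.root D.backEdges ∅

/-- The edges of a chain (given as the list of its vertices in order). -/
def chainEdges (c : List V) : List (Sym2 V) :=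
  List.zipWith (fun a b => s(a, b)) c c.tail

/-- A chain is a cycle if it has at least two vertices and ends where it starts. -/
def IsCycleChain (c : List V) : Prop := 2 ≤ c.length ∧ c.head? = c.getLast?

/-!
A chain other than the first one that closes up at its origin `v` enters `v` through a child
`c` of `v` that no earlier chain has visited. Back edges are processed in increasing order of
the discovery time of their origin, so a back edge from the subtree of `c` to a proper ancestor
of `v` has already been processed; its endpoint in that subtree is then visited, and climbing
the tree from it through visited vertices reaches `c`. Hence every edge leaving the subtree of
`c` ends at `v`, and `v` is a cut vertex.

Conversely, if no later chain is a cycle, each of them starts at a visited vertex and ends at a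
different visited vertex: it is an ear attached to the cycle `D1` and the ears before it, and
attaching an ear keeps any two vertices connected after the removal of one vertex. Minimum
degree two makes the chains cover every vertex: outside the visited set only tree edges
remain, and a leaf of the part of the tree outside it would have degree one.
-/

set_option linter.unusedSectionVars false

lemma iterate_sub_apply_iterate {α : Type*} (f : α → α) {s t : ℕ} (h : t ≤ s) (x : α) :
    f^[s - t] (f^[t] x) = f^[s] x := by
  rw [← Function.iterate_add_apply, Nat.sub_add_cancel h]

lemma mem_cons_map_range_iff {f : ℕ → V} {v a : V} {m : ℕ} :
    a ∈ v :: (List.range (m + 1)).map f ↔ a = v ∨ ∃ t ≤ m, f t = a := by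
  simp

lemma isCycleChain_cons_map_range_iff {f : ℕ → V} {v : V} {m : ℕ} :
    IsCycleChain (v :: (List.range (m + 1)).map f) ↔ f m = v := by
  have hlast : (v :: (List.range (m + 1)).map f).getLast? = some (f m) := by
    rw [List.range_succ, List.map_append, List.map_singleton, ← List.cons_append]
    exact List.getLast?_concat
  simp only [IsCycleChain, hlast, List.head?_cons, Option.some.injEq, List.length_cons,
    List.length_map, List.length_range]
  exact ⟨fun h => h.2.symm, fun h => ⟨by omega, h.symm⟩⟩

lemma towardRoot_eq_map_range {p : V → V} {r w : V} {vis : Finset V} {k n : ℕ}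
    (hk : p^[k] w ∈ vis ∨ p^[k] w = r) (hlt : ∀ j < k, ¬(p^[j] w ∈ vis ∨ p^[j] w = r))
    (hkn : k ≤ n) :
    towardRoot p r vis n w = (List.range (k + 1)).map (p^[·] w) := by
  induction k generalizing w n with
  | zero =>
    cases n with
    | zero => rfl
    | succ n => simp [towardRoot, show w ∈ vis ∨ w = r from hk]
  | succ k ih =>
    obtain ⟨n, rfl⟩ : ∃ n', n = n' + 1 := ⟨n - 1, by omega⟩
    rw [towardRoot, if_neg (by simpa using hlt 0 k.succ_pos),
      ih (w := p w) hk (fun j hj => hlt (j + 1) (by omega)) (by omega)]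
    conv_rhs => rw [List.range_succ_eq_map, List.map_cons, List.map_map]
    rfl

lemma mem_towardRoot_self (p : V → V) (r : V) (vis : Finset V) (n : ℕ) (w : V) :
    w ∈ towardRoot p r vis n w := by
  cases n with
  | zero => simp [towardRoot]
  | succ n =>
    simp only [towardRoot]
    split_ifs <;> simp

namespace SimpleGraph

variable {G : SimpleGraph V} {x : ℕ → V} {a b c z : V} {n t t' : ℕ}

def ReachableAvoiding (G : SimpleGraph V) (z a b : V) : Prop :=
  ∃ (ha : a ≠ z) (hb : b ≠ z), (G.induce {u | u ≠ z}).Reachable ⟨a, ha⟩ ⟨b, hb⟩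

lemma ReachableAvoiding.refl (ha : a ≠ z) : G.ReachableAvoiding z a a :=
  ⟨ha, ha, .refl _⟩

lemma ReachableAvoiding.symm : G.ReachableAvoiding z a b → G.ReachableAvoiding z b a
  | ⟨ha, hb, h⟩ => ⟨hb, ha, h.symm⟩

lemma ReachableAvoiding.trans :
    G.ReachableAvoiding z a b → G.ReachableAvoiding z b c → G.ReachableAvoiding z a c
  | ⟨ha, _, h⟩, ⟨_, hc, h'⟩ => ⟨ha, hc, h.trans h'⟩

lemma Adj.reachableAvoiding (h : G.Adj a b) (ha : a ≠ z) (hb : b ≠ z) :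
    G.ReachableAvoiding z a b :=
  ⟨ha, hb, Adj.reachable (by simpa using h)⟩

lemma reachableAvoiding_of_adj_succ (hadj : ∀ i < n, G.Adj (x i) (x (i + 1))) (htt' : t ≤ t')
    (ht' : t' ≤ n) (hz : ∀ s, t ≤ s → s ≤ t' → x s ≠ z) :
    G.ReachableAvoiding z (x t) (x t') := by
  induction t', htt' using Nat.le_induction with
  | base => exact .refl (hz t le_rfl le_rfl)
  | succ s hts ih =>
    exact (ih (by omega) fun i hi hi' => hz i hi (by omega)).trans
      ((hadj s (by omega)).reachableAvoiding (hz s hts (by omega)) (hz (s + 1) (by omega) le_rfl))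

lemma reachableAvoiding_zero_or_end (hadj : ∀ i < n, G.Adj (x i) (x (i + 1)))
    (hinj : Set.InjOn x (Set.Iic n)) (ht : t ≤ n) (hz : x t ≠ z) :
    G.ReachableAvoiding z (x t) (x 0) ∨ G.ReachableAvoiding z (x t) (x n) := by
  by_cases h : ∃ s, t < s ∧ s ≤ n ∧ x s = z
  · obtain ⟨s, hts, hsn, rfl⟩ := h
    refine .inl (reachableAvoiding_of_adj_succ hadj (Nat.zero_le t) ht fun i _ hi hxi => ?_).symm
    have := hinj (Set.mem_Iic.mpr (by omega)) (Set.mem_Iic.mpr hsn) hxi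
    omega
  · simp only [not_exists, not_and] at h
    refine .inr (reachableAvoiding_of_adj_succ hadj ht le_rfl fun s hts hsn => ?_)
    rcases hts.lt_or_eq with hts | rfl
    · exact h s hts hsn
    · exact hz

lemma reachableAvoiding_of_cycle (hadj : ∀ i < n, G.Adj (x i) (x (i + 1)))
    (hinj : Set.InjOn x (Set.Iic n)) (hclose : G.Adj (x n) (x 0)) (ht : t ≤ n) (ht' : t' ≤ n)
    (hz : x t ≠ z) (hz' : x t' ≠ z) : G.ReachableAvoiding z (x t) (x t') := by
  rcases reachableAvoiding_zero_or_end hadj hinj ht hz with h | h <;>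
    rcases reachableAvoiding_zero_or_end hadj hinj ht' hz' with h' | h'
  · exact h.trans h'.symm
  · exact (h.trans (hclose.symm.reachableAvoiding h.snd.fst h'.snd.fst)).trans h'.symm
  · exact (h.trans (hclose.reachableAvoiding h.snd.fst h'.snd.fst)).trans h'.symm
  · exact h.trans h'.symm

lemma mem_of_reachable_induce_ne {S : Set V} (hS : ∀ a b, G.Adj a b → a ∈ S → b ∉ S → b = z)
    {u u' : {v | v ≠ z}} (h : (G.induce {v | v ≠ z}).Reachable u u') (hu : u.1 ∈ S) :
    u'.1 ∈ S := by
  obtain ⟨p⟩ := h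
  induction p with
  | nil => exact hu
  | @cons u₁ u₂ _ hadj _ ih =>
    exact ih (by_contra fun hu₂ => u₂.2 (hS _ _ (by simpa using hadj) hu hu₂))

lemma exists_adj_ne_of_two_le_degree [DecidableRel G.Adj] (h : 2 ≤ G.degree a) (y : V) :
    ∃ b, G.Adj a b ∧ b ≠ y := by
  rw [← card_neighborFinset_eq_degree] at h
  obtain ⟨b, hb, hby⟩ := Finset.exists_mem_ne (s := G.neighborFinset a) (by omega) y
  exact ⟨b, (mem_neighborFinset _ _ _).mp hb, hby⟩

lemma two_le_degree_of_forall_connected_induce [DecidableRel G.Adj] (hcard : 3 ≤ Fintype.card V)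
    (hG : ∀ z, (G.induce {u | u ≠ z}).Connected) (v : V) : 2 ≤ G.degree v := by
  by_contra hlt
  have hone := Finset.card_le_one.mp
    (show (G.neighborFinset v).card ≤ 1 by rw [card_neighborFinset_eq_degree]; omega)
  obtain ⟨n, hnv, hn⟩ : ∃ n ≠ v, ∀ b, G.Adj v b → b = n := by
    by_cases h : ∃ b, G.Adj v b
    · obtain ⟨b, hb⟩ := h
      exact ⟨b, hb.ne', fun b' hb' => hone _ ((mem_neighborFinset _ _ _).mpr hb') _
        ((mem_neighborFinset _ _ _).mpr hb)⟩
    · obtain ⟨n, hn⟩ := Fintype.exists_ne_of_one_lt_card (by omega) v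
      exact ⟨n, hn, fun b hb => absurd ⟨b, hb⟩ h⟩
  obtain ⟨z, -, hz⟩ := Finset.exists_mem_notMem_of_card_lt_card
    (show ({v, n} : Finset V).card < Finset.univ.card from
      (Finset.card_le_two).trans_lt (by rw [Finset.card_univ]; omega))
  simp only [Finset.mem_insert, Finset.mem_singleton, not_or] at hz
  have hsep : ∀ a b, G.Adj a b → a ∈ ({v} : Set V) → b ∉ ({v} : Set V) → b = n :=
    fun a b hab ha _ => hn b (ha ▸ hab)
  exact hz.1 (mem_of_reachable_induce_ne hsep ((hG n).preconnected ⟨v, hnv.symm⟩ ⟨z, hz.2⟩) rfl)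

end SimpleGraph

namespace SchmidtDFS

open Finset

variable {G : SimpleGraph V} (D : SchmidtDFS G) {v w v₁ : V} {es : List (V × V)}
  {vis : Finset V}

lemma adj_cases {a b : V} (h : G.Adj a b) :
    a = D.parent b ∨ b = D.parent a ∨ (a, b) ∈ D.backEdges ∨ (b, a) ∈ D.backEdges := by
  by_cases h₁ : a = D.parent b
  · exact .inl h₁
  by_cases h₂ : b = D.parent a
  · exact .inr (.inl h₂)
  exact .inr (.inr (D.backEdges_complete a b h h₁ h₂))

lemma eq_root_of_iterate_parent_eq_self {a : V} {k : ℕ} (hk : 0 < k)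
    (h : D.parent^[k] a = a) : a = D.root := by
  obtain ⟨K, hK⟩ := D.reaches_root a
  have hper := (show Function.IsPeriodicPt D.parent k a from h).mul_const K
  calc a = D.parent^[k * K - K] (D.parent^[K] a) := by
        rw [iterate_sub_apply_iterate _ (Nat.le_mul_of_pos_left K hk), hper.eq]
    _ = D.root := by rw [hK, Function.iterate_fixed D.parent_root]

lemma dfi_iterate_parent_le (k : ℕ) (a : V) : D.dfi (D.parent^[k] a) ≤ D.dfi a := by
  induction k with
  | zero => rfl
  | succ k ih =>
    rw [Function.iterate_succ_apply']
    rcases eq_or_ne (D.parent^[k] a) D.root with h | h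
    · rwa [h, D.parent_root, ← h]
    · exact (D.dfi_parent _ h).le.trans ih

lemma dfi_lt_of_iterate_parent_eq {a b : V} {k : ℕ} (h : D.parent^[k] a = b) (hab : a ≠ b) :
    D.dfi b < D.dfi a := by
  rw [← h] at hab ⊢
  exact (D.dfi_iterate_parent_le k a).lt_of_ne fun he => hab (D.dfi_inj he).symm

lemma injOn_iterate_parent {m : ℕ} (hm : ∀ j < m, D.parent^[j] w ≠ D.root) :
    Set.InjOn (D.parent^[·] w) (Set.Iic m) := by
  have key : ∀ t t', t < t' → t' ≤ m → D.parent^[t] w ≠ D.parent^[t'] w := fun t t' h ht' he =>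
    hm t (by omega) (D.eq_root_of_iterate_parent_eq_self (by omega : 0 < t' - t)
      (by rw [iterate_sub_apply_iterate _ h.le, he]))
  intro t ht t' ht' he
  simp only [Set.mem_Iic] at ht ht'
  by_contra hne
  rcases Nat.lt_or_gt_of_ne hne with h | h
  · exact key t t' h ht' he
  · exact key t' t h ht he.symm

lemma adj_iterate_parent_succ {m : ℕ} (hm : ∀ j < m, D.parent^[j] w ≠ D.root) :
    ∀ i < m, G.Adj (D.parent^[i] w) (D.parent^[i + 1] w) := fun i hi => by
  rw [Function.iterate_succ_apply']
  exact D.parent_adj _ (hm i hi)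

lemma eq_of_parent_eq_root {x b b' : V} {i j : ℕ} (hb : D.parent b = D.root)
    (hb' : D.parent b' = D.root) (hbr : b ≠ D.root) (hbr' : b' ≠ D.root)
    (hi : D.parent^[i] x = b) (hj : D.parent^[j] x = b') : b = b' := by
  wlog hij : i ≤ j generalizing i j b b'
  · exact (this hb' hb hbr' hbr hj hi (by omega)).symm
  obtain ⟨d, rfl⟩ := Nat.exists_eq_add_of_le hij
  cases d with
  | zero => rw [← hi, ← hj]; rfl
  | succ d =>
    refine absurd ?_ hbr'
    rw [← hj, add_comm, Function.iterate_add_apply, hi, Function.iterate_succ_apply, hb,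
      Function.iterate_fixed D.parent_root]

def chain (vis : Finset V) (v w : V) : List V :=
  v :: towardRoot D.parent D.root (insert v vis) (Fintype.card V) w

lemma exists_chain_eq (vis : Finset V) {k : ℕ} (hk : D.parent^[k] w = v) :
    ∃ m ≤ k, D.chain vis v w = v :: (List.range (m + 1)).map (D.parent^[·] w) ∧
      D.parent^[m] w ∈ insert v vis ∧
      ∀ j < m, D.parent^[j] w ∉ insert v vis ∧ D.parent^[j] w ≠ D.root := by
  classical
  have hex : ∃ j, D.parent^[j] w ∈ insert v vis ∨ D.parent^[j] w = D.root :=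
    ⟨k, .inl (hk ▸ mem_insert_self _ _)⟩
  have hfree : ∀ j < Nat.find hex, D.parent^[j] w ∉ insert v vis ∧ D.parent^[j] w ≠ D.root :=
    fun j hj => not_or.mp (Nat.find_min hex hj)
  have hmk : Nat.find hex ≤ k := Nat.find_min' hex (.inl (hk ▸ mem_insert_self _ _))
  have hstop : D.parent^[Nat.find hex] w ∈ insert v vis := by
    refine (Nat.find_spec hex).elim id fun hroot => ?_
    have hv : v = D.root := by
      rw [← hk, ← iterate_sub_apply_iterate _ hmk, hroot, Function.iterate_fixed D.parent_root]
    rw [hroot, ← hv]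
    exact mem_insert_self _ _
  have hcard : Nat.find hex + 1 ≤ Fintype.card V := by
    simpa using Finset.card_le_card_of_injOn (s := range (Nat.find hex + 1)) (t := univ)
      (D.parent^[·] w) (fun _ _ => mem_univ _)
      ((D.injOn_iterate_parent fun j hj => (hfree j hj).2).mono fun t ht => by
        simp only [coe_range, Set.mem_Iio] at ht; exact Set.mem_Iic.mpr (by omega))
  exact ⟨_, hmk, congrArg (v :: ·) (towardRoot_eq_map_range (Nat.find_spec hex)
    (fun j hj => Nat.find_min hex hj) (by omega)), hstop, hfree⟩

lemma adj_of_mem_backEdges (hvw : (v, w) ∈ D.backEdges) : G.Adj v w :=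
  (D.backEdges_spec _ hvw).1

lemma exists_iterate_parent_eq_of_mem_backEdges (hvw : (v, w) ∈ D.backEdges) :
    ∃ k, D.parent^[k] w = v :=
  let ⟨_, _, k, _, hk⟩ := D.backEdges_spec _ hvw
  ⟨k, hk⟩

lemma parent_mem_chain_or_mem (vis : Finset V) {k : ℕ} (hk : D.parent^[k] w = v) {a : V}
    (ha : a ∈ D.chain vis v w) : D.parent a ∈ D.chain vis v w ∨ a ∈ insert v vis := by
  obtain ⟨m, -, hc, hstop, -⟩ := D.exists_chain_eq vis hk
  rw [hc, mem_cons_map_range_iff] at ha ⊢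
  rcases ha with rfl | ⟨t, htm, rfl⟩
  · exact .inr (mem_insert_self _ _)
  rcases htm.lt_or_eq with ht | rfl
  · exact .inl (.inr ⟨t + 1, ht, Function.iterate_succ_apply' _ _ _⟩)
  · exact .inr hstop

lemma isCycleChain_chain_empty (hvw : (v, w) ∈ D.backEdges) : IsCycleChain (D.chain ∅ v w) := by
  obtain ⟨k, hk⟩ := D.exists_iterate_parent_eq_of_mem_backEdges hvw
  obtain ⟨m, -, hc, hstop, -⟩ := D.exists_chain_eq ∅ hk
  rw [hc, isCycleChain_cons_map_range_iff]
  simpa using hstop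

lemma backEdges_ne_nil [DecidableRel G.Adj] [Nonempty V] (hdeg : ∀ u, 2 ≤ G.degree u) :
    D.backEdges ≠ [] := by
  intro hnil
  obtain ⟨x, -, hmax⟩ := exists_max_image univ D.dfi univ_nonempty
  obtain ⟨b, hxb, hbp⟩ := SimpleGraph.exists_adj_ne_of_two_le_degree (hdeg x) (D.parent x)
  rcases D.adj_cases hxb with hpb | hpb | he | he
  · exact (D.dfi_lt_of_iterate_parent_eq (k := 1) hpb.symm hxb.ne').not_ge (hmax b (mem_univ b))
  · exact hbp hpb
  all_goals simp [hnil] at he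

-- An invariant of the construction, for the back edges `es` still to be processed and the set
-- `vis` of vertices visited so far.
structure IsStage (es : List (V × V)) (vis : Finset V) : Prop where
  suffix : es <:+ D.backEdges
  parent_mem : ∀ a ∈ vis, D.parent a ∈ vis ∨ ∀ e ∈ es, D.dfi a ≤ D.dfi e.1
  processed : ∀ e ∈ D.backEdges, e ∈ es ∨ e.1 ∈ vis ∧ e.2 ∈ vis

lemma isStage_backEdges : D.IsStage D.backEdges ∅ :=
  ⟨List.suffix_refl _, by simp, fun _ he => .inl he⟩

namespace IsStage

variable {D}

lemma mem_backEdges (h : D.IsStage ((v, w) :: es) vis) : (v, w) ∈ D.backEdges :=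
  h.suffix.subset List.mem_cons_self

lemma dfi_le (h : D.IsStage ((v, w) :: es) vis) : ∀ e ∈ (v, w) :: es, D.dfi v ≤ D.dfi e.1 := by
  have hsorted := List.pairwise_cons.mp (D.backEdges_sorted.sublist h.suffix.sublist)
  intro e he
  rcases List.mem_cons.mp he with rfl | he
  · exact le_rfl
  · exact hsorted.1 e he

lemma cons (h : D.IsStage ((v, w) :: es) vis) :
    D.IsStage es (vis ∪ (D.chain vis v w).toFinset) where
  suffix := (List.suffix_cons _ _).trans h.suffix
  parent_mem a ha := by
    have hold : a ∈ vis → D.parent a ∈ vis ∪ (D.chain vis v w).toFinset ∨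
        ∀ e ∈ es, D.dfi a ≤ D.dfi e.1 := fun ha =>
      (h.parent_mem a ha).imp (fun h' => mem_union_left _ h')
        (fun h' e he => h' e (List.mem_cons_of_mem _ he))
    obtain ⟨k, hk⟩ := D.exists_iterate_parent_eq_of_mem_backEdges h.mem_backEdges
    rcases mem_union.mp ha with ha | ha
    · exact hold ha
    rcases D.parent_mem_chain_or_mem vis hk (List.mem_toFinset.mp ha) with h' | h'
    · exact .inl (mem_union_right _ (List.mem_toFinset.mpr h'))
    rcases mem_insert.mp h' with rfl | h'
    · exact .inr fun e he => h.dfi_le e (List.mem_cons_of_mem _ he)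
    · exact hold h'
  processed e he := by
    have hchain : v ∈ vis ∪ (D.chain vis v w).toFinset ∧ w ∈ vis ∪ (D.chain vis v w).toFinset :=
      ⟨mem_union_right _ (List.mem_toFinset.mpr List.mem_cons_self),
        mem_union_right _ (List.mem_toFinset.mpr
          (List.mem_cons_of_mem _ (mem_towardRoot_self _ _ _ _ _)))⟩
    rcases h.processed e he with h' | h'
    · rcases List.mem_cons.mp h' with rfl | h'
      · exact .inr hchain
      · exact .inl h'
    · exact .inr ⟨mem_union_left _ h'.1, mem_union_left _ h'.2⟩

lemma mem_of_iterate_parent_eq (h : D.IsStage ((v, w) :: es) vis) {z c : V} {s k : ℕ}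
    (hz : z ∈ vis) (hzc : D.parent^[s] z = c) (hcv : D.parent^[k] c = v) : c ∈ vis := by
  induction s generalizing z with
  | zero => exact hzc ▸ hz
  | succ s ih =>
    rcases h.parent_mem z hz with hpz | hdfi
    · exact ih hpz hzc
    have hzv : D.parent^[k + (s + 1)] z = v := by rw [Function.iterate_add_apply, hzc, hcv]
    by_cases hzv' : z = v
    · subst hzv'
      have hroot := D.eq_root_of_iterate_parent_eq_self (by omega) hzv
      rw [← hzc, hroot, Function.iterate_fixed D.parent_root, ← hroot]
      exact hz
    · exact absurd (hdfi _ List.mem_cons_self)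
        (not_le.mpr (D.dfi_lt_of_iterate_parent_eq hzv hzv'))

lemma mem_of_not_isCycleChain (h : D.IsStage ((v, w) :: es) vis)
    (hnc : ¬ IsCycleChain (D.chain vis v w)) : v ∈ vis := by
  obtain ⟨k, hk⟩ := D.exists_iterate_parent_eq_of_mem_backEdges h.mem_backEdges
  obtain ⟨m, hmk, hc, hstop, -⟩ := D.exists_chain_eq vis hk
  rw [hc, isCycleChain_cons_map_range_iff] at hnc
  exact h.mem_of_iterate_parent_eq (k := 0) ((mem_insert.mp hstop).resolve_left hnc)
    (by rw [iterate_sub_apply_iterate _ hmk, hk] : D.parent^[k - m] (D.parent^[m] w) = v) rfl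

lemma eq_of_adj_of_iterate_parent_eq (h : D.IsStage ((v, w) :: es) vis) {c : V}
    (hcv : D.parent c = v) (hc_vis : c ∉ vis) (a b : V) (hab : G.Adj a b)
    (ha : a ∈ {a | ∃ s, D.parent^[s] a = c}) (hb : b ∉ {a | ∃ s, D.parent^[s] a = c}) :
    b = v := by
  obtain ⟨s, hs⟩ := ha
  rcases D.adj_cases hab with hpar | hpar | hback | hback
  · exact absurd ⟨s + 1, by rw [Function.iterate_succ_apply, ← hpar, hs]⟩ hb
  · cases s with
    | zero => rw [hpar, ← hcv, ← hs]; rfl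
    | succ s => exact absurd ⟨s, by rw [hpar, ← Function.iterate_succ_apply, hs]⟩ hb
  · obtain ⟨k', hk'⟩ := D.exists_iterate_parent_eq_of_mem_backEdges hback
    exact absurd ⟨s + k', by rw [Function.iterate_add_apply, hk', hs]⟩ hb
  · obtain ⟨k', hk'⟩ := D.exists_iterate_parent_eq_of_mem_backEdges hback
    rcases le_or_gt k' s with hle | hlt
    · exact absurd ⟨s - k', by rw [← hk', iterate_sub_apply_iterate _ hle, hs]⟩ hb
    have hvb : D.parent^[k' - s - 1] v = b := by
      rw [← hcv, ← hs, ← Function.iterate_succ_apply, ← Function.iterate_add_apply, ← hk']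
      congr 1
      omega
    by_contra hbv
    rcases h.processed _ hback with he | he
    · exact (D.dfi_lt_of_iterate_parent_eq hvb (Ne.symm hbv)).not_ge (h.dfi_le _ he)
    · exact hc_vis (h.mem_of_iterate_parent_eq (k := 1) he.2 hs hcv)

lemma not_isCycleChain_chain (h : D.IsStage ((v, w) :: es) vis) (hy : ∃ y ∈ vis, y ≠ v)
    (hG : ∀ z, (G.induce {u | u ≠ z}).Connected) : ¬ IsCycleChain (D.chain vis v w) := by
  have hadj := D.adj_of_mem_backEdges h.mem_backEdges
  obtain ⟨k, hk⟩ := D.exists_iterate_parent_eq_of_mem_backEdges h.mem_backEdges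
  obtain ⟨m, -, hc, -, hfree⟩ := D.exists_chain_eq vis hk
  rw [hc, isCycleChain_cons_map_range_iff]
  intro hmv
  have hm : m ≠ 0 := by rintro rfl; exact hadj.ne hmv.symm
  set c := D.parent^[m - 1] w
  have hcv : D.parent c = v := by
    rw [← Function.iterate_succ_apply' D.parent, Nat.succ_eq_add_one, Nat.sub_add_cancel
      (Nat.one_le_iff_ne_zero.mpr hm), hmv]
  have hc_vis : c ∉ vis := fun h' => (hfree (m - 1) (by omega)).1 (mem_insert_of_mem h')
  have hsep := h.eq_of_adj_of_iterate_parent_eq hcv hc_vis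
  obtain ⟨y, hy, hyv⟩ := hy
  obtain ⟨s, hs⟩ := SimpleGraph.mem_of_reachable_induce_ne hsep
    ((hG v).preconnected ⟨w, hadj.ne'⟩ ⟨y, hyv⟩) ⟨m - 1, rfl⟩
  exact hc_vis (h.mem_of_iterate_parent_eq (k := 1) hy hs hcv)

lemma not_isCycleChain_of_mem_runChains (h : D.IsStage es vis) (hvis : 1 < vis.card)
    (hG : ∀ z, (G.induce {u | u ≠ z}).Connected) :
    ∀ c ∈ runChains D.parent D.root es vis, ¬ IsCycleChain c := by
  induction es generalizing vis with
  | nil => simp [runChains]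
  | cons e es ih =>
    obtain ⟨v, w⟩ := e
    intro c hc
    rcases List.mem_cons.mp hc with rfl | hc
    · exact h.not_isCycleChain_chain (exists_mem_ne hvis v) hG
    · exact ih h.cons (hvis.trans_le (card_le_card subset_union_left)) c hc

end IsStage

lemma exists_mem_reachableAvoiding_of_mem_chain (hvw : (v, w) ∈ D.backEdges) (hv : v ∈ vis)
    (hnc : ¬ IsCycleChain (D.chain vis v w)) {a z : V} (ha : a ∈ D.chain vis v w) (haz : a ≠ z) :
    ∃ a' ∈ vis, G.ReachableAvoiding z a a' := by
  obtain ⟨k, hk⟩ := D.exists_iterate_parent_eq_of_mem_backEdges hvw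
  obtain ⟨m, -, hc, hstop, hfree⟩ := D.exists_chain_eq vis hk
  rw [hc, isCycleChain_cons_map_range_iff] at hnc
  rw [hc, mem_cons_map_range_iff] at ha
  have hstop : D.parent^[m] w ∈ vis := (mem_insert.mp hstop).resolve_left hnc
  rcases ha with rfl | ⟨t, htm, rfl⟩
  · exact ⟨a, hv, .refl haz⟩
  have hpath := D.adj_iterate_parent_succ fun j hj => (hfree j hj).2
  have hv_path : ∀ i ≤ m, D.parent^[i] w ≠ v := fun i hi hiv => by
    rcases hi.lt_or_eq with hi | rfl
    · exact (hfree i hi).1 (hiv ▸ mem_insert_self _ _)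
    · exact hnc hiv
  by_cases hvz : v = z
  · subst hvz
    exact ⟨_, hstop, SimpleGraph.reachableAvoiding_of_adj_succ hpath htm le_rfl
      fun s _ hs => hv_path s hs⟩
  rcases SimpleGraph.reachableAvoiding_zero_or_end hpath
    (D.injOn_iterate_parent fun j hj => (hfree j hj).2) htm haz with h | h
  · exact ⟨v, hv, h.trans ((D.adj_of_mem_backEdges hvw).symm.reachableAvoiding h.snd.fst hvz)⟩
  · exact ⟨_, hstop, h⟩

-- The invariant when moreover every chain after the first one, which starts at `v₁`, was an ear.
structure IsEarStage (v₁ : V) (es : List (V × V)) (vis : Finset V) : Prop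
    extends D.IsStage es vis where
  mem : v₁ ∈ vis
  parent_mem_or_eq : ∀ a ∈ vis, D.parent a ∈ vis ∨ a = v₁
  reaches : ∀ a ∈ vis, ∃ n, D.parent^[n] a = v₁
  reachableAvoiding : ∀ z a b, a ∈ vis → b ∈ vis → a ≠ z → b ≠ z → G.ReachableAvoiding z a b

lemma isEarStage_first {rest : List (V × V)} (hBE : D.backEdges = (v₁, w) :: rest) :
    D.IsEarStage v₁ rest (∅ ∪ (D.chain ∅ v₁ w).toFinset) := by
  have hvw : (v₁, w) ∈ D.backEdges := hBE ▸ List.mem_cons_self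
  obtain ⟨k, hk⟩ := D.exists_iterate_parent_eq_of_mem_backEdges hvw
  obtain ⟨m, -, hc, hstop, hfree⟩ := D.exists_chain_eq ∅ hk
  have hmv : D.parent^[m] w = v₁ := by simpa using hstop
  have hmem : ∀ a, a ∈ ∅ ∪ (D.chain ∅ v₁ w).toFinset ↔ ∃ t ≤ m, D.parent^[t] w = a := by
    intro a
    rw [empty_union, List.mem_toFinset, hc, mem_cons_map_range_iff]
    exact ⟨fun h => h.elim (fun h => ⟨m, le_rfl, hmv.trans h.symm⟩) id, .inr⟩
  have hpath := D.adj_iterate_parent_succ fun j hj => (hfree j hj).2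
  refine ⟨(hBE ▸ D.isStage_backEdges).cons, (hmem v₁).mpr ⟨m, le_rfl, hmv⟩, ?_, ?_, ?_⟩
  · intro a ha
    obtain ⟨t, htm, rfl⟩ := (hmem a).mp ha
    rcases htm.lt_or_eq with ht | rfl
    · exact .inl ((hmem _).mpr ⟨t + 1, ht, Function.iterate_succ_apply' _ _ _⟩)
    · exact .inr hmv
  · intro a ha
    obtain ⟨t, htm, rfl⟩ := (hmem a).mp ha
    exact ⟨m - t, by rw [iterate_sub_apply_iterate _ htm, hmv]⟩
  · intro z a b ha hb haz hbz
    obtain ⟨t, htm, rfl⟩ := (hmem a).mp ha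
    obtain ⟨t', ht'm, rfl⟩ := (hmem b).mp hb
    exact SimpleGraph.reachableAvoiding_of_cycle hpath
      (D.injOn_iterate_parent fun j hj => (hfree j hj).2)
      (hmv ▸ (D.adj_of_mem_backEdges hvw)) htm ht'm haz hbz

namespace IsEarStage

variable {D}

lemma cons (h : D.IsEarStage v₁ ((v, w) :: es) vis) (hnc : ¬ IsCycleChain (D.chain vis v w)) :
    D.IsEarStage v₁ es (vis ∪ (D.chain vis v w).toFinset) := by
  have hv : v ∈ vis := h.mem_of_not_isCycleChain hnc
  have hvw := h.mem_backEdges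
  obtain ⟨k, hk⟩ := D.exists_iterate_parent_eq_of_mem_backEdges hvw
  refine ⟨h.toIsStage.cons, mem_union_left _ h.mem, ?_, ?_, ?_⟩
  · intro a ha
    rcases mem_union.mp ha with ha | ha
    · exact (h.parent_mem_or_eq a ha).imp_left (mem_union_left _)
    rcases D.parent_mem_chain_or_mem vis hk (List.mem_toFinset.mp ha) with h' | h'
    · exact .inl (mem_union_right _ (List.mem_toFinset.mpr h'))
    · exact (h.parent_mem_or_eq a (insert_eq_of_mem hv ▸ h')).imp_left (mem_union_left _)
  · intro a ha
    rcases mem_union.mp ha with ha | ha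
    · exact h.reaches a ha
    obtain ⟨m, -, hc, hstop, -⟩ := D.exists_chain_eq vis hk
    rw [List.mem_toFinset, hc, mem_cons_map_range_iff] at ha
    rcases ha with rfl | ⟨t, htm, rfl⟩
    · exact h.reaches a hv
    obtain ⟨n, hn⟩ := h.reaches _ (insert_eq_of_mem hv ▸ hstop)
    exact ⟨n + (m - t), by rw [Function.iterate_add_apply, iterate_sub_apply_iterate _ htm, hn]⟩
  · have hanchor : ∀ z a, a ∈ vis ∪ (D.chain vis v w).toFinset → a ≠ z →
        ∃ a' ∈ vis, G.ReachableAvoiding z a a' := by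
      intro z a ha haz
      rcases mem_union.mp ha with ha | ha
      · exact ⟨a, ha, .refl haz⟩
      · exact D.exists_mem_reachableAvoiding_of_mem_chain hvw hv hnc (List.mem_toFinset.mp ha) haz
    intro z a b ha hb haz hbz
    obtain ⟨a', ha', haa'⟩ := hanchor z a ha haz
    obtain ⟨b', hb', hbb'⟩ := hanchor z b hb hbz
    exact (haa'.trans (h.reachableAvoiding z a' b' ha' hb' haa'.snd.fst hbb'.snd.fst)).trans
      hbb'.symm

lemma exists_nil (h : D.IsEarStage v₁ es vis)
    (hnc : ∀ c ∈ runChains D.parent D.root es vis, ¬ IsCycleChain c) :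
    ∃ F, D.IsEarStage v₁ [] F := by
  induction es generalizing vis with
  | nil => exact ⟨vis, h⟩
  | cons e es ih =>
    obtain ⟨v, w⟩ := e
    exact ih (h.cons (hnc _ List.mem_cons_self)) fun c hc => hnc c (List.mem_cons_of_mem _ hc)

lemma parent_eq_or_parent_eq_of_not_mem {F : Finset V} (h : D.IsEarStage v₁ [] F) {a b : V}
    (ha : a ∉ F) (hab : G.Adj a b) : b = D.parent a ∨ D.parent b = a := by
  rcases D.adj_cases hab with h' | h' | h' | h'
  · exact .inr h'.symm
  · exact .inl h'
  · exact absurd ((h.processed _ h').resolve_left List.not_mem_nil).1 ha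
  · exact absurd ((h.processed _ h').resolve_left List.not_mem_nil).2 ha

-- A vertex of maximal discovery time violating the claim would have only its parent as neighbour.
lemma exists_iterate_parent_eq_of_not_mem [DecidableRel G.Adj] {F : Finset V}
    (h : D.IsEarStage v₁ [] F) (hdeg : ∀ u, 2 ≤ G.degree u) {y : V} (hy : y ∉ F) :
    ∃ n, D.parent^[n] v₁ = y := by
  classical
  by_contra hy'
  obtain ⟨y, hy, hymax⟩ := exists_max_image
    (univ.filter fun y => y ∉ F ∧ ¬ ∃ n, D.parent^[n] v₁ = y) D.dfi ⟨y, by simpa [hy] using hy'⟩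
  simp only [mem_filter, mem_univ, true_and] at hy hymax
  obtain ⟨b, hyb, hbp⟩ := SimpleGraph.exists_adj_ne_of_two_le_degree (hdeg y) (D.parent y)
  have hpb : D.parent b = y := (h.parent_eq_or_parent_eq_of_not_mem hy.1 hyb).resolve_left hbp
  have hbF : b ∉ F := fun hbF => hy.2 ⟨1, by
    rw [Function.iterate_one, ← (h.parent_mem_or_eq b hbF).resolve_left (hpb ▸ hy.1), hpb]⟩
  have hbanc : ¬ ∃ n, D.parent^[n] v₁ = b := fun ⟨n, hn⟩ =>
    hy.2 ⟨n + 1, by rw [Function.iterate_succ_apply', hn, hpb]⟩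
  exact (D.dfi_lt_of_iterate_parent_eq (k := 1) hpb hyb.ne').not_ge (hymax b ⟨hbF, hbanc⟩)

-- By the previous lemma the vertices outside `F` lie on the tree path from `v₁` to the root;
-- two neighbours of the root would be two children of the root on that path.
lemma mem_of_nil [DecidableRel G.Adj] {F : Finset V} (h : D.IsEarStage v₁ [] F)
    (hdeg : ∀ u, 2 ≤ G.degree u) (u : V) : u ∈ F := by
  by_contra hu
  have hroot : D.root ∉ F := by
    intro hr
    obtain ⟨n, hn⟩ := h.reaches _ hr
    obtain ⟨j, hj⟩ := h.exists_iterate_parent_eq_of_not_mem hdeg hu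
    rw [Function.iterate_fixed D.parent_root] at hn
    rw [← hj, ← hn, Function.iterate_fixed D.parent_root] at hu
    exact hu hr
  have hroot_adj : ∀ b, G.Adj D.root b → D.parent b = D.root ∧ ∃ n, D.parent^[n] v₁ = b := by
    intro b hb
    have hpb := (h.parent_eq_or_parent_eq_of_not_mem hroot hb).resolve_left
      fun h' => hb.ne (h'.trans D.parent_root).symm
    refine ⟨hpb, ?_⟩
    by_cases hbF : b ∈ F
    · exact ⟨0, ((h.parent_mem_or_eq b hbF).resolve_left (hpb ▸ hroot)).symm⟩
    · exact h.exists_iterate_parent_eq_of_not_mem hdeg hbF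
  obtain ⟨b, hb, -⟩ := SimpleGraph.exists_adj_ne_of_two_le_degree (hdeg D.root) D.root
  obtain ⟨b', hb', hbb'⟩ := SimpleGraph.exists_adj_ne_of_two_le_degree (hdeg D.root) b
  obtain ⟨hpb, i, hi⟩ := hroot_adj b hb
  obtain ⟨hpb', j, hj⟩ := hroot_adj b' hb'
  exact hbb' (D.eq_of_parent_eq_root hpb' hpb hb'.ne' hb.ne' hj hi)

end IsEarStage

lemma chains_eq_cons (hBE : D.backEdges = (v, w) :: es) :
    D.chains = D.chain ∅ v w :: runChains D.parent D.root es (∅ ∪ (D.chain ∅ v w).toFinset) := by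
  rw [chains, hBE]
  rfl

lemma exists_chains_eq_cons_of_forall_connected_induce [DecidableRel G.Adj] [Nonempty V]
    (hdeg : ∀ u, 2 ≤ G.degree u) (hG : ∀ z, (G.induce {u | u ≠ z}).Connected) :
    ∃ c cs, D.chains = c :: cs ∧ IsCycleChain c ∧ ∀ c' ∈ cs, ¬ IsCycleChain c' := by
  obtain ⟨⟨v, w⟩, rest, hBE⟩ := List.exists_cons_of_ne_nil (D.backEdges_ne_nil hdeg)
  have hvw : (v, w) ∈ D.backEdges := hBE ▸ List.mem_cons_self
  have hcard : 1 < (∅ ∪ (D.chain ∅ v w).toFinset).card :=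
    one_lt_card.mpr ⟨v, by simp [chain], w, by simp [chain, mem_towardRoot_self],
      (D.adj_of_mem_backEdges hvw).ne⟩
  exact ⟨_, _, D.chains_eq_cons hBE, D.isCycleChain_chain_empty hvw,
    (hBE ▸ D.isStage_backEdges).cons.not_isCycleChain_of_mem_runChains hcard hG⟩

lemma forall_connected_induce_of_chains_eq_cons [DecidableRel G.Adj]
    (hV : 1 < Fintype.card V) (hdeg : ∀ u, 2 ≤ G.degree u) {c : List V} {cs : List (List V)}
    (hch : D.chains = c :: cs) (hcs : ∀ c' ∈ cs, ¬ IsCycleChain c') (z : V) :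
    (G.induce {u | u ≠ z}).Connected := by
  obtain ⟨⟨v₁, w₁⟩, rest, hBE⟩ : ∃ e rest, D.backEdges = e :: rest := by
    cases hBE : D.backEdges with
    | nil => simp [chains, hBE, runChains] at hch
    | cons e rest => exact ⟨e, rest, rfl⟩
  rw [D.chains_eq_cons hBE, List.cons.injEq] at hch
  obtain ⟨F, hF⟩ := (D.isEarStage_first hBE).exists_nil (hch.2 ▸ hcs)
  rw [SimpleGraph.connected_iff]
  refine ⟨fun a b => ?_, ?_⟩
  · obtain ⟨_, _, hab⟩ := hF.reachableAvoiding z a b (hF.mem_of_nil hdeg a) (hF.mem_of_nil hdeg b)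
      a.2 b.2
    exact hab
  · obtain ⟨u, hu⟩ := Fintype.exists_ne_of_one_lt_card hV z
    exact ⟨⟨u, hu⟩⟩

end SchmidtDFS

theorem biconnected_iff_min_degree_and_unique_cycle_chain_general
    (G : SimpleGraph V) [DecidableRel G.Adj]
    (hcard : 3 ≤ Fintype.card V) (D : SchmidtDFS G) :
    (∀ v : V, (SimpleGraph.induce {u : V | u ≠ v} G).Connected) ↔
      (2 ≤ G.minDegree ∧
        ∃ c cs, D.chains = c :: cs ∧ IsCycleChain c ∧ ∀ c' ∈ cs, ¬ IsCycleChain c') := by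
  have : Nonempty V := Fintype.card_pos_iff.mp (by omega)
  constructor
  · intro hG
    have hdeg := SimpleGraph.two_le_degree_of_forall_connected_induce hcard hG
    exact ⟨G.le_minDegree_of_forall_le_degree 2 hdeg,
      D.exists_chains_eq_cons_of_forall_connected_induce hdeg hG⟩
  · rintro ⟨hmin, c, cs, hch, -, hcs⟩
    exact D.forall_connected_induce_of_chains_eq_cons (by omega)
      (fun u => hmin.trans (G.minDegree_le_degree u)) hch hcs

/-- Schmidt's criterion: a connected graph `G` with at least three vertices is
2-vertex-connected (it has no cut vertex, i.e. removing any single vertex leaves the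
graph connected) if and only if its minimum degree is at least `2` and the first chain
`D1` of a chain decomposition is the only chain that is a cycle. -/
theorem biconnected_iff_min_degree_and_unique_cycle_chain
    (G : SimpleGraph V) [DecidableRel G.Adj] (hG : G.Connected)
    (hcard : 3 ≤ Fintype.card V) (D : SchmidtDFS G) :
    (∀ v : V, (SimpleGraph.induce {u : V | u ≠ v} G).Connected) ↔
      (2 ≤ G.minDegree ∧
        ∃ c cs, D.chains = c :: cs ∧ IsCycleChain c ∧ ∀ c' ∈ cs, ¬ IsCycleChain c') :=
  biconnected_iff_min_degree_and_unique_cycle_chain_general G hcard D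
end

section
/- In Schmidt's chain decomposition of a connected undirected graph, the first chain D1 (if any back edge exists) is always a cycle. -/
/-!
The first chain starts at the origin `v` of a back edge `(v, w)` and climbs from `w` towards
the root while only `v` is visited. As `v` is an ancestor of `w` and the root is fixed by
`parent`, the climb first stops at `v`; the fuel `card V` suffices because `dfi` strictly
decreases along the climb, so its vertices are distinct.
-/

variable {V : Type*} [Fintype V] [DecidableEq V]

section TowardRoot

variable {α : Type*} [DecidableEq α] (parent : α → α) (root : α) (visited : Finset α)

lemma towardRoot_ne_nil (n : ℕ) (w : α) : towardRoot parent root visited n w ≠ [] := by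
  cases n with
  | zero => simp [towardRoot]
  | succ n => simp only [towardRoot]; split <;> simp

lemma towardRoot_getLast?_eq_iterate {n j : ℕ} {w : α} (hjn : j ≤ n)
    (hbefore : ∀ i < j, ¬(parent^[i] w ∈ visited ∨ parent^[i] w = root))
    (hstop : parent^[j] w ∈ visited ∨ parent^[j] w = root) :
    (towardRoot parent root visited n w).getLast? = some (parent^[j] w) := by
  induction j generalizing n w with
  | zero => cases n <;> simp_all [towardRoot]
  | succ j ih =>
    obtain ⟨n, rfl⟩ : ∃ m, n = m + 1 := ⟨n - 1, by omega⟩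
    have hw : ¬(w ∈ visited ∨ w = root) := hbefore 0 j.succ_pos
    obtain ⟨a, t, ht⟩ := List.exists_cons_of_ne_nil
      (towardRoot_ne_nil parent root visited n (parent w))
    have hlast := ih (n := n) (w := parent w) (by omega)
      (fun i hi => by simpa only [← Function.iterate_succ_apply] using hbefore (i + 1) (by omega))
      (by rwa [← Function.iterate_succ_apply])
    rw [ht] at hlast
    rw [towardRoot, if_neg hw, ht, List.getLast?_cons_cons, hlast, Function.iterate_succ_apply]

end TowardRoot

section Iterate

variable {α β : Type*} {f : α → α}

lemma iterate_eq_of_le_of_fixed {r x : α} (hr : f r = r) {i j : ℕ} (hij : i ≤ j)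
    (hi : f^[i] x = r) : f^[j] x = r := by
  rw [← Nat.sub_add_cancel hij, Function.iterate_add_apply, hi, Function.iterate_fixed hr]

variable [Preorder β] {μ : α → β} {p : α → Prop}

lemma lt_of_iterate_decreasing (hμ : ∀ y, p y → μ (f y) < μ y) {x : α} {a b : ℕ}
    (hab : a < b) (hp : ∀ i < b, p (f^[i] x)) : μ (f^[b] x) < μ (f^[a] x) := by
  induction b with
  | zero => omega
  | succ b ih =>
    have hstep : μ (f^[b + 1] x) < μ (f^[b] x) := by
      rw [Function.iterate_succ_apply']
      exact hμ _ (hp b b.lt_succ_self)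
    rcases Nat.lt_succ_iff_lt_or_eq.mp hab with hab | rfl
    · exact hstep.trans (ih hab fun i hi => hp i (by omega))
    · exact hstep

lemma lt_card_of_iterate_decreasing [Fintype α] (hμ : ∀ y, p y → μ (f y) < μ y) {x : α}
    {J : ℕ} (hp : ∀ i < J, p (f^[i] x)) : J < Fintype.card α := by
  let orbit : Fin (J + 1) → α := fun i => f^[i] x
  have hanti : StrictAnti (μ ∘ orbit) := fun a b hab =>
    lt_of_iterate_decreasing hμ hab fun i hi => hp i (by omega)
  simpa using Fintype.card_le_of_injective orbit hanti.injective.of_comp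

end Iterate

lemma SchmidtDFS.isCycleChain_of_iterate_parent_eq {G : SimpleGraph V} (D : SchmidtDFS G)
    {v w : V} {k : ℕ} (hk : D.parent^[k] w = v) :
    IsCycleChain (v :: towardRoot D.parent D.root (insert v ∅) (Fintype.card V) w) := by
  classical
  have hex : ∃ j, D.parent^[j] w = v := ⟨k, hk⟩
  have hJ : D.parent^[Nat.find hex] w = v := Nat.find_spec hex
  have hbefore : ∀ i < Nat.find hex, D.parent^[i] w ≠ v ∧ D.parent^[i] w ≠ D.root :=
    fun i hi => ⟨Nat.find_min hex hi, fun hroot => Nat.find_min hex hi <|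
      hroot.trans ((iterate_eq_of_le_of_fixed D.parent_root hi.le hroot).symm.trans hJ)⟩
  have hJcard : Nat.find hex < Fintype.card V :=
    lt_card_of_iterate_decreasing D.dfi_parent fun i hi => (hbefore i hi).2
  have hlast := towardRoot_getLast?_eq_iterate D.parent D.root (insert v ∅) hJcard.le
    (fun i hi => by simpa using hbefore i hi) (by simp [hJ])
  obtain ⟨a, t, ht⟩ := List.exists_cons_of_ne_nil
    (towardRoot_ne_nil D.parent D.root (insert v ∅) (Fintype.card V) w)
  rw [ht] at hlast ⊢
  refine ⟨by simp, ?_⟩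
  rw [List.getLast?_cons_cons, hlast, hJ, List.head?_cons]

theorem first_chain_is_cycle_general
    (G : SimpleGraph V) (D : SchmidtDFS G)
    (hne : D.backEdges ≠ []) :
    ∃ c cs, D.chains = c :: cs ∧ IsCycleChain c := by
  obtain ⟨⟨v, w⟩, rest, hcons⟩ := List.exists_cons_of_ne_nil hne
  obtain ⟨-, -, k, -, hk⟩ := D.backEdges_spec (v, w) (hcons ▸ List.mem_cons_self)
  exact ⟨_, _, by rw [SchmidtDFS.chains, hcons, runChains], D.isCycleChain_of_iterate_parent_eq hk⟩

/-- In Schmidt's chain decomposition of a connected graph with at least one back edge,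
the first chain is always a cycle. -/
theorem first_chain_is_cycle
    (G : SimpleGraph V) (hG : G.Connected) (D : SchmidtDFS G)
    (hne : D.backEdges ≠ []) :
    ∃ c cs, D.chains = c :: cs ∧ IsCycleChain c :=
  first_chain_is_cycle_general G D hne
end
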